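/- Let f be a multiplicative ℂ-linear map on m×m complex matrices with fⁿ = id, Gᵢ(X) = (A·f(A)⋯fⁱ⁻¹(A))·fⁱ(X)·(fⁱ⁻¹(B)⋯f(B)·B), and let k be a positive integer. If 𝒳 solves the Stein equation 𝒳 = Gₙ(𝒳) + Σ_{i=0}^{n-1} Gᵢ(C), then the value (1/(kn))·Σ_{i=0}^{kn-1} (Gᵢ(𝒳) + (kn−i−1)·Gᵢ(C)) equals (1/n)·Σ_{i=0}^{n-1} (Gᵢ(𝒳) + (n−i−1)·Gᵢ(C)); i.e., the averaging formula is independent of the period multiple k used. -/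

import Mathlib

open Finset

/-- Ordered product `A · f(A) · f²(A) ⋯ f^{i-1}(A)`. -/
noncomputable def prodA {m : ℕ} (f : Matrix (Fin m) (Fin m) ℂ → Matrix (Fin m) (Fin m) ℂ)
    (A : Matrix (Fin m) (Fin m) ℂ) : ℕ → Matrix (Fin m) (Fin m) ℂ
  | 0 => 1
  | i + 1 => prodA f A i * f^[i] A

/-- Ordered product `f^{i-1}(B) ⋯ f(B) · B`. -/
noncomputable def prodB {m : ℕ} (f : Matrix (Fin m) (Fin m) ℂ → Matrix (Fin m) (Fin m) ℂ)
    (B : Matrix (Fin m) (Fin m) ℂ) : ℕ → Matrix (Fin m) (Fin m) ℂ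
  | 0 => 1
  | i + 1 => f^[i] B * prodB f B i

/-- `Gᵢ(X) = (A·f(A)⋯f^{i-1}(A)) · fⁱ(X) · (f^{i-1}(B)⋯f(B)·B)`. -/
noncomputable def G {m : ℕ} (f : Matrix (Fin m) (Fin m) ℂ → Matrix (Fin m) (Fin m) ℂ)
    (A B : Matrix (Fin m) (Fin m) ℂ) (i : ℕ) (X : Matrix (Fin m) (Fin m) ℂ) :
    Matrix (Fin m) (Fin m) ℂ :=
  prodA f A i * f^[i] X * prodB f B i

/-- The averaging operator `F(𝒳) = (1/n)·Σ_{i<n} (Gᵢ(𝒳) + (n−i−1)·Gᵢ(C))`. -/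
noncomputable def Fop {m : ℕ} (f : Matrix (Fin m) (Fin m) ℂ → Matrix (Fin m) (Fin m) ℂ)
    (A B C : Matrix (Fin m) (Fin m) ℂ) (n : ℕ) (𝒳 : Matrix (Fin m) (Fin m) ℂ) :
    Matrix (Fin m) (Fin m) ℂ :=
  ((n : ℂ)⁻¹) • ∑ i ∈ range n, (G f A B i 𝒳 + ((n - i - 1 : ℕ) : ℂ) • G f A B i C)

/-!
The `i`-th iterate of `T X = A · f(X) · B + C` is `Gᵢ(X) + Σ_{s<i} G_s(C)`, and
`Σ_{i<N} (N−i−1)·Gᵢ(C) = Σ_{i<N} Σ_{s<i} G_s(C)`, so `Fop f A B C N 𝒳` is the mean of the first `N`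
iterates of `T` at `𝒳`. The Stein equation says exactly that `𝒳` is an `n`-periodic point of `T`,
and the mean of a periodic sequence over `k` periods equals its mean over one period.
-/

open Function

theorem Function.Periodic.sum_range_mul {M : Type*} [AddCommMonoid M] {g : ℕ → M} {n : ℕ}
    (hg : Periodic g n) (k : ℕ) : ∑ i ∈ range (k * n), g i = k • ∑ i ∈ range n, g i := by
  induction k with
  | zero => simp
  | succ k ih =>
    rw [add_mul, one_mul, sum_range_add, ih, succ_nsmul]
    congr 1
    refine sum_congr rfl fun i _ => ?_
    simpa [add_comm] using hg.nat_mul k i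

theorem sum_range_tsub_nsmul_eq_sum_range_sum {M : Type*} [AddCommMonoid M] (c : ℕ → M)
    (N : ℕ) : ∑ i ∈ range N, (N - i - 1) • c i = ∑ i ∈ range N, ∑ s ∈ range i, c s := by
  induction N with
  | zero => simp
  | succ N ih =>
    have hcoeff : ∀ i ∈ range N, (N + 1 - i - 1) • c i = (N - i - 1) • c i + c i := by
      intro i hi
      rw [← succ_nsmul, show N + 1 - i - 1 = N - i - 1 + 1 by grind]
    rw [sum_range_succ, sum_congr rfl hcoeff, sum_add_distrib, ih, sum_range_succ]
    simp

def steinMap {m : ℕ} (f : Matrix (Fin m) (Fin m) ℂ → Matrix (Fin m) (Fin m) ℂ)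
    (A B C X : Matrix (Fin m) (Fin m) ℂ) : Matrix (Fin m) (Fin m) ℂ :=
  A * f X * B + C

section

variable {m : ℕ} {f : Matrix (Fin m) (Fin m) ℂ → Matrix (Fin m) (Fin m) ℂ}
  (A B C : Matrix (Fin m) (Fin m) ℂ)

theorem G_zero (X : Matrix (Fin m) (Fin m) ℂ) : G f A B 0 X = X := by
  simp [G, prodA, prodB]

theorem G_succ (hmul : ∀ X Y, f (X * Y) = f X * f Y) (i : ℕ) (X : Matrix (Fin m) (Fin m) ℂ) :
    G f A B (i + 1) X = G f A B i (A * f X * B) := by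
  simp only [G, prodA, prodB, iterate_succ_apply, Semiconj₂.iterate hmul i _ _, mul_assoc]

theorem G_add (hadd : ∀ X Y, f (X + Y) = f X + f Y) (i : ℕ) (X Y : Matrix (Fin m) (Fin m) ℂ) :
    G f A B i (X + Y) = G f A B i X + G f A B i Y := by
  rw [G, G, G, Semiconj₂.iterate hadd i, mul_add, add_mul]

theorem iterate_steinMap (hadd : ∀ X Y, f (X + Y) = f X + f Y)
    (hmul : ∀ X Y, f (X * Y) = f X * f Y) (i : ℕ) (X : Matrix (Fin m) (Fin m) ℂ) :
    (steinMap f A B C)^[i] X = G f A B i X + ∑ s ∈ range i, G f A B s C := by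
  induction i generalizing X with
  | zero => simp [G_zero]
  | succ i ih =>
    rw [iterate_succ_apply, ih, steinMap, G_add A B hadd, ← G_succ A B hmul, sum_range_succ]
    abel

theorem Fop_eq_smul_sum_iterate_steinMap (hadd : ∀ X Y, f (X + Y) = f X + f Y)
    (hmul : ∀ X Y, f (X * Y) = f X * f Y) (N : ℕ) (X : Matrix (Fin m) (Fin m) ℂ) :
    Fop f A B C N X = (N : ℂ)⁻¹ • ∑ i ∈ range N, (steinMap f A B C)^[i] X := by
  simp only [Fop, iterate_steinMap A B C hadd hmul, sum_add_distrib, Nat.cast_smul_eq_nsmul,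
    sum_range_tsub_nsmul_eq_sum_range_sum]

end

theorem stmt_19_general {m n : ℕ} (k : ℕ) (hk : 0 < k)
    (f : Matrix (Fin m) (Fin m) ℂ → Matrix (Fin m) (Fin m) ℂ)
    (hlin : IsLinearMap ℂ f) (hmul : ∀ X Y, f (X * Y) = f X * f Y)
    (A B C 𝒳 : Matrix (Fin m) (Fin m) ℂ)
    (h𝒳 : 𝒳 = G f A B n 𝒳 + ∑ i ∈ range n, G f A B i C) :
    Fop f A B C (k * n) 𝒳 = Fop f A B C n 𝒳 := by
  have hperiodic : IsPeriodicPt (steinMap f A B C) n 𝒳 := by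
    rw [IsPeriodicPt, IsFixedPt, iterate_steinMap A B C hlin.map_add hmul, ← h𝒳]
  rw [Fop_eq_smul_sum_iterate_steinMap A B C hlin.map_add hmul,
    Fop_eq_smul_sum_iterate_steinMap A B C hlin.map_add hmul,
    hperiodic.periodic_iterate.sum_range_mul, ← Nat.cast_smul_eq_nsmul ℂ, smul_smul]
  congr 1
  rw [Nat.cast_mul, mul_inv, mul_right_comm, inv_mul_cancel₀ (Nat.cast_ne_zero.mpr hk.ne'), one_mul]

theorem stmt_19 {m n : ℕ} (hn : 0 < n) (k : ℕ) (hk : 0 < k)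
    (f : Matrix (Fin m) (Fin m) ℂ → Matrix (Fin m) (Fin m) ℂ)
    (hlin : IsLinearMap ℂ f) (hmul : ∀ X Y, f (X * Y) = f X * f Y)
    (hper : f^[n] = id)
    (A B C 𝒳 : Matrix (Fin m) (Fin m) ℂ)
    (h𝒳 : 𝒳 = G f A B n 𝒳 + ∑ i ∈ range n, G f A B i C) :
    Fop f A B C (k * n) 𝒳 = Fop f A B C n 𝒳 :=
  stmt_19_general k hk f hlin hmul A B C 𝒳 h𝒳
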